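/- arXiv:1610.08306 — 3 statements merged into one kernel-verified Lean document; each statement's English description precedes it below -/
import Mathlib

section
/- Let M be an abelian rack with α(y) = 0 ▷ y and ε(x) = x ▷ 0 as above. Then ε satisfies the identity ε² = ε ∘ (id − α), i.e., ε(ε(x)) = ε(x) − α(ε(x)) for all x in M. -/
/-- In an abelian rack, `ε(ε(x)) = ε(x) - α(ε(x))` where
`ε(x) = x ▷ 0` and `α(y) = 0 ▷ y`. -/
theorem stmt2 (M : Type*) [AddCommGroup M] (op : M → M → M)
    (hbij : ∀ x : M, Function.Bijective (op x))
    (hdist : ∀ x y z : M, op x (op y z) = op (op x y) (op x z))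
    (hadd : ∀ m n p q : M, op (m + n) (p + q) = op m p + op n q)
    (hzero : op 0 0 = 0) :
    ∀ x : M, op (op x 0) 0 = op x 0 - op 0 (op x 0) := by
  intro x
  have h1 : op x 0 = op (op x 0) (op x 0) := by
    have := hdist x 0 0
    rwa [hzero] at this
  have h2 : op (op x 0) (op x 0) = op (op x 0) 0 + op 0 (op x 0) := by
    have := hadd (op x 0) 0 0 (op x 0)
    rwa [add_zero, zero_add] at this
  rw [h2] at h1
  exact eq_sub_of_add_eq h1.symm
end

section
/- In the Laurent polynomial ring ℤ[A^{±1}], the quotient by the ideal generated by the 3×3 matrix relations given by the rows (1−A, −1, A), (A, 1−A, −1), (−1, A, 1−A) applied to a free module of rank 3 — i.e., the cokernel of the ℤ[A^{±1}]-linear map ℤ[A^{±1}]³ → ℤ[A^{±1}]³ given by this matrix — is isomorphic as a ℤ[A^{±1}]-module to ℤ[A^{±1}]/(A²−A+1) ⊕ ℤ[A^{±1}]. -/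
/-!
Multiplying the trefoil matrix on the left by `!![1, 0, 0; 1 - t, 1, 0; 1, 1, 1]` and on the right
by `!![0, 1, 1; -1, 1 - t, 1; 0, 0, 1]`, both of determinant `1`, gives the Smith normal form
`diagonal ![1, t ^ 2 - t + 1, 0]`; this identity holds for `t` in any commutative ring. Unimodular
row and column operations do not change the cokernel, and the cokernel of the diagonal matrix is
`0 ⊕ R ⧸ (t ^ 2 - t + 1) ⊕ R`.
-/

open Matrix

namespace Matrix

variable {R : Type*} [CommRing R] {n : Type*} [Fintype n] [DecidableEq n]

noncomputable def cokernelEquivOfMulMulEq {M D P Q : Matrix n n R} (hP : IsUnit P.det)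
    (hQ : IsUnit Q.det) (h : P * M * Q = D) :
    ((n → R) ⧸ LinearMap.range M.toLin') ≃ₗ[R] (n → R) ⧸ LinearMap.range D.toLin' :=
  Submodule.Quotient.equiv _ _ (P.toLinearEquiv' (invertibleOfIsUnitDet P hP)) <| by
    have hQ_top : LinearMap.range Q.toLin' = ⊤ :=
      (Q.toLinearEquiv' (invertibleOfIsUnitDet Q hQ)).range
    rw [← h, toLin'_mul, LinearMap.range_comp, hQ_top, Submodule.map_top, toLin'_mul,
      LinearMap.range_comp]
    rfl

noncomputable def diagonalCokernelProj (a : R) : (Fin 3 → R) →ₗ[R] (R ⧸ Ideal.span {a}) × R :=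
  ((Ideal.span {a}).mkQ ∘ₗ LinearMap.proj 1).prod (LinearMap.proj 2)

theorem diagonalCokernelProj_surjective (a : R) : Function.Surjective (diagonalCokernelProj a) := by
  rintro ⟨x, y⟩
  obtain ⟨r, rfl⟩ := Submodule.Quotient.mk_surjective _ x
  exact ⟨![0, r, y], by simp [diagonalCokernelProj]⟩

theorem ker_diagonalCokernelProj (a : R) :
    LinearMap.ker (diagonalCokernelProj a) = LinearMap.range (diagonal ![1, a, 0]).toLin' := by
  ext v
  simp only [LinearMap.mem_ker, diagonalCokernelProj, LinearMap.prod_apply, Function.prod,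
    Prod.mk_eq_zero, LinearMap.comp_apply, LinearMap.proj_apply, Submodule.mkQ_apply,
    Submodule.Quotient.mk_eq_zero, Ideal.mem_span_singleton, LinearMap.mem_range,
    toLin'_apply]
  constructor
  · rintro ⟨⟨c, hc⟩, h2⟩
    refine ⟨![v 0, c, 0], funext fun i => ?_⟩
    fin_cases i <;> simp [mulVec_diagonal, hc, h2]
  · rintro ⟨w, rfl⟩
    exact ⟨⟨w 1, by simp [mulVec_diagonal]⟩, by simp [mulVec_diagonal]⟩

noncomputable def diagonalCokernelEquiv (a : R) :
    ((Fin 3 → R) ⧸ LinearMap.range (diagonal ![1, a, 0]).toLin') ≃ₗ[R]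
      (R ⧸ Ideal.span {a}) × R :=
  (Submodule.quotEquivOfEq _ _ (ker_diagonalCokernelProj a).symm).trans
    ((diagonalCokernelProj a).quotKerEquivOfSurjective (diagonalCokernelProj_surjective a))

end Matrix

section Trefoil

variable {R : Type*} [CommRing R] (t : R)

theorem trefoil_smith_form :
    !![1, 0, 0; 1 - t, 1, 0; 1, 1, 1] * !![1 - t, -1, t; t, 1 - t, -1; -1, t, 1 - t] *
        !![0, 1, 1; -1, 1 - t, 1; 0, 0, 1] = diagonal ![1, t ^ 2 - t + 1, 0] := by
  ext i j
  fin_cases i <;> fin_cases j <;> simp [mul_apply, Fin.sum_univ_three] <;> ring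

noncomputable def trefoilCokernelEquiv :
    ((Fin 3 → R) ⧸ LinearMap.range (!![1 - t, -1, t; t, 1 - t, -1; -1, t, 1 - t]).toLin') ≃ₗ[R]
      (R ⧸ Ideal.span {t ^ 2 - t + 1}) × R :=
  (cokernelEquivOfMulMulEq (by simp [det_fin_three]) (by simp [det_fin_three])
    (trefoil_smith_form t)).trans (diagonalCokernelEquiv _)

end Trefoil

open LaurentPolynomial

/-- the cokernel of the map `ℤ[A^{±1}]³ → ℤ[A^{±1}]³` given by the
presentation matrix of the trefoil knot is isomorphic to
`ℤ[A^{±1}]/(A²-A+1) ⊕ ℤ[A^{±1}]`. -/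
theorem stmt9 :
    Nonempty
      ((((Fin 3 → LaurentPolynomial ℤ) ⧸
          LinearMap.range (Matrix.toLin'
            (!![1 - T 1, -1, T 1; T 1, 1 - T 1, -1; -1, T 1, 1 - T 1] :
              Matrix (Fin 3) (Fin 3) (LaurentPolynomial ℤ)))))
        ≃ₗ[LaurentPolynomial ℤ]
          ((LaurentPolynomial ℤ ⧸
              Ideal.span {(T 1 : LaurentPolynomial ℤ) ^ 2 - T 1 + 1}) ×
            LaurentPolynomial ℤ)) :=
  ⟨trefoilCokernelEquiv (T 1)⟩
end

section
/- Let M be an abelian group with commuting endomorphisms α and ε, where α is an automorphism, satisfying ε² = ε ∘ (id − α). Define x ▷ y = ε(x) + α(y). Then (M, ▷) is a rack, and it is a quandle if and only if ε = id − α. -/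
/-- For commuting `α` (an automorphism) and `ε` with
`ε² = ε ∘ (id - α)`, the operation `x ▷ y = ε x + α y` is a rack, and it is a
quandle iff `ε = id - α`. -/
theorem stmt19 (M : Type*) [AddCommGroup M] (α : M ≃+ M) (ε : M →+ M)
    (hcomm : ∀ x : M, α (ε x) = ε (α x))
    (hsq : ∀ x : M, ε (ε x) = ε (x - α x))
    (op : M → M → M) (hop : ∀ x y : M, op x y = ε x + α y) :
    ((∀ x : M, Function.Bijective (op x)) ∧
      (∀ x y z : M, op x (op y z) = op (op x y) (op x z))) ∧
    ((∀ x : M, op x x = x) ↔ ∀ x : M, ε x = x - α x) := by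
  refine ⟨⟨fun x => ?_, fun x y z => ?_⟩, ?_⟩
  · have : op x = (fun y => ε x + y) ∘ (α : M → M) := by
      funext y; simp [hop]
    rw [this]
    exact ((Equiv.addLeft (ε x)).bijective).comp α.bijective
  · simp only [hop, map_add]
    have h1 : ε (ε x) = ε x - ε (α x) := by rw [hsq x, map_sub]
    rw [hcomm, hcomm, h1]
    abel
  · constructor
    · intro h x
      have := h x
      rw [hop] at this
      have : ε x + α x = x := this
      rw [eq_sub_iff_add_eq]
      exact this
    · intro h x
      rw [hop, h x]
      abel
end
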